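/- arXiv:2605.13943 — 6 statements merged into one kernel-verified Lean document; each statement's English description precedes it below -/
import Mathlib

section
/- Let n ≥ 2 and let W = (w_{ij}) be a symmetric n×n real matrix with w_{ij} > 0 for all i ≠ j. Then for every symmetric n×n real matrix S = (s_{ij}) one has L_W(S) ≥ H(W), and equality holds if and only if there exists a constant c ∈ ℝ such that s_{ij} = log(w_{ij}) + c for all i ≠ j. -/
open scoped BigOperators

/-- The weighted InfoNCE loss. -/
noncomputable def infoNCE {n : ℕ} (W S : Matrix (Fin n) (Fin n) ℝ) : ℝ :=
  -(1 / (n : ℝ)) * ∑ i : Fin n, ∑ j ∈ Finset.univ.erase i,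
    (W i j / ∑ k ∈ Finset.univ.erase i, W i k) *
      Real.log (Real.exp (S i j) / ∑ k ∈ Finset.univ.erase i, Real.exp (S i k))

/-- The entropic lower bound (with the convention `0 * log 0 = 0`,
which holds automatically since `Real.log 0 = 0`). -/
noncomputable def entropicBound {n : ℕ} (W : Matrix (Fin n) (Fin n) ℝ) : ℝ :=
  -(1 / (n : ℝ)) * ∑ i : Fin n, ∑ j ∈ Finset.univ.erase i,
    (W i j / ∑ k ∈ Finset.univ.erase i, W i k) *
      Real.log (W i j / ∑ k ∈ Finset.univ.erase i, W i k)

/-!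
Row by row, the loss is the cross-entropy of the softmax of `S i` relative to the normalized
row `W i`, and the bound is the entropy of that row; Gibbs' inequality (from `log x ≤ x - 1`)
compares them, with equality iff each softmax row equals the normalized row, i.e.
`S i j = log W i j + cᵢ`. Symmetry of `S` and `W` applied to the pair `(i, j)` forces `cᵢ = cⱼ`.
-/

open Real Finset

theorem mul_log_div_le_sub {p q : ℝ} (hp : 0 < p) (hq : 0 < q) : p * log (q / p) ≤ q - p := by
  have := mul_le_mul_of_nonneg_left (log_le_sub_one_of_pos (div_pos hq hp)) hp.le
  rwa [mul_sub, mul_div_cancel₀ _ hp.ne', mul_one] at this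

theorem mul_log_div_eq_sub_iff {p q : ℝ} (hp : 0 < p) (hq : 0 < q) :
    p * log (q / p) = q - p ↔ q = p := by
  refine ⟨fun h => ?_, by rintro rfl; simp [div_self hp.ne']⟩
  by_contra hne
  have hlt := mul_lt_mul_of_pos_left
    (log_lt_sub_one_of_pos (div_pos hq hp) (div_ne_one_of_ne hne)) hp
  rw [mul_sub, mul_div_cancel₀ _ hp.ne', mul_one] at hlt
  exact hlt.ne h

section Gibbs

variable {ι : Type*} {s : Finset ι} {p q : ι → ℝ}

theorem sum_mul_log_div_eq_sub (hp : ∀ i ∈ s, 0 < p i) (hq : ∀ i ∈ s, 0 < q i) :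
    ∑ i ∈ s, p i * log (q i / p i) = ∑ i ∈ s, p i * log (q i) - ∑ i ∈ s, p i * log (p i) := by
  rw [← sum_sub_distrib]
  refine sum_congr rfl fun i hi => ?_
  rw [log_div (hq i hi).ne' (hp i hi).ne', mul_sub]

theorem sum_mul_log_le_sum_mul_log (hp : ∀ i ∈ s, 0 < p i) (hq : ∀ i ∈ s, 0 < q i)
    (hqp : ∑ i ∈ s, q i ≤ ∑ i ∈ s, p i) :
    ∑ i ∈ s, p i * log (q i) ≤ ∑ i ∈ s, p i * log (p i) := by
  have := sum_le_sum fun i hi => mul_log_div_le_sub (hp i hi) (hq i hi)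
  rw [sum_mul_log_div_eq_sub hp hq, sum_sub_distrib] at this
  linarith

theorem sum_mul_log_eq_sum_mul_log_iff (hp : ∀ i ∈ s, 0 < p i) (hq : ∀ i ∈ s, 0 < q i)
    (hqp : ∑ i ∈ s, q i ≤ ∑ i ∈ s, p i) :
    ∑ i ∈ s, p i * log (q i) = ∑ i ∈ s, p i * log (p i) ↔ ∀ i ∈ s, q i = p i := by
  refine ⟨fun h => ?_, fun h => sum_congr rfl fun i hi => by rw [h i hi]⟩
  have hle : ∀ i ∈ s, p i * log (q i / p i) ≤ q i - p i :=
    fun i hi => mul_log_div_le_sub (hp i hi) (hq i hi)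
  have hsum : ∑ i ∈ s, p i * log (q i / p i) = ∑ i ∈ s, (q i - p i) := by
    refine le_antisymm (sum_le_sum hle) ?_
    rw [sum_mul_log_div_eq_sub hp hq, h, sum_sub_distrib]
    linarith
  intro i hi
  exact (mul_log_div_eq_sub_iff (hp i hi) (hq i hi)).1 ((sum_eq_sum_iff_of_le hle).1 hsum i hi)

end Gibbs

section Softmax

variable {ι : Type*} {s : Finset ι} {f g w : ι → ℝ}

theorem div_sum_pos (hf : ∀ j ∈ s, 0 < f j) {j : ι} (hj : j ∈ s) :
    0 < f j / ∑ k ∈ s, f k :=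
  div_pos (hf j hj) (sum_pos hf ⟨j, hj⟩)

theorem sum_div_sum_eq_sum_div_sum (hf : ∀ j ∈ s, 0 < f j) (hg : ∀ j ∈ s, 0 < g j) :
    ∑ j ∈ s, f j / ∑ k ∈ s, f k = ∑ j ∈ s, g j / ∑ k ∈ s, g k := by
  rw [← sum_div, ← sum_div]
  rcases s.eq_empty_or_nonempty with rfl | hs
  · simp
  · rw [div_self (sum_pos hf hs).ne', div_self (sum_pos hg hs).ne']

theorem sum_mul_log_softmax_le (hw : ∀ j ∈ s, 0 < w j) (x : ι → ℝ) :
    ∑ j ∈ s, (w j / ∑ k ∈ s, w k) * log (exp (x j) / ∑ k ∈ s, exp (x k)) ≤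
      ∑ j ∈ s, (w j / ∑ k ∈ s, w k) * log (w j / ∑ k ∈ s, w k) :=
  have hx : ∀ j ∈ s, 0 < exp (x j) := fun _ _ => exp_pos _
  sum_mul_log_le_sum_mul_log (fun _ => div_sum_pos hw) (fun _ => div_sum_pos hx)
    (sum_div_sum_eq_sum_div_sum hx hw).le

theorem sum_mul_log_softmax_eq_iff (hw : ∀ j ∈ s, 0 < w j) (x : ι → ℝ) :
    ∑ j ∈ s, (w j / ∑ k ∈ s, w k) * log (exp (x j) / ∑ k ∈ s, exp (x k)) =
        ∑ j ∈ s, (w j / ∑ k ∈ s, w k) * log (w j / ∑ k ∈ s, w k) ↔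
      ∃ c, ∀ j ∈ s, x j = log (w j) + c := by
  have hx : ∀ j ∈ s, 0 < exp (x j) := fun _ _ => exp_pos _
  rw [sum_mul_log_eq_sum_mul_log_iff (fun _ => div_sum_pos hw) (fun _ => div_sum_pos hx)
    (sum_div_sum_eq_sum_div_sum hx hw).le]
  constructor
  · intro h
    refine ⟨log (∑ k ∈ s, exp (x k)) - log (∑ k ∈ s, w k), fun j hj => ?_⟩
    have hlog := congrArg log (h j hj)
    rw [log_div (exp_pos _).ne' (sum_pos hx ⟨j, hj⟩).ne',
      log_div (hw j hj).ne' (sum_pos hw ⟨j, hj⟩).ne', log_exp] at hlog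
    linarith
  · rintro ⟨c, hc⟩ j hj
    have hexp : ∀ k ∈ s, exp (x k) = w k * exp c := fun k hk => by
      rw [hc k hk, exp_add, exp_log (hw k hk)]
    rw [sum_congr rfl hexp, ← sum_mul, hexp j hj, mul_div_mul_right _ _ (exp_pos c).ne']

end Softmax

theorem Matrix.IsSymm.exists_add_const_iff {ι : Type*} {S T : Matrix ι ι ℝ}
    (hS : S.IsSymm) (hT : T.IsSymm) :
    (∀ i, ∃ c, ∀ j, i ≠ j → S i j = T i j + c) ↔ ∃ c, ∀ i j, i ≠ j → S i j = T i j + c := by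
  refine ⟨fun h => ?_, fun ⟨c, hc⟩ i => ⟨c, hc i⟩⟩
  choose c hc using h
  have hconst : ∀ i j, c i = c j := by
    intro i j
    rcases eq_or_ne i j with rfl | hij
    · rfl
    · have := hc j i hij.symm
      rw [hS.apply, hT.apply, hc i j hij] at this
      linarith
  rcases isEmpty_or_nonempty ι with _ | ⟨⟨i₀⟩⟩
  · exact ⟨0, fun i => isEmptyElim i⟩
  · exact ⟨c i₀, fun i j hij => by rw [hc i j hij, hconst i i₀]⟩

/-- entropic lower bound for the weighted InfoNCE loss, with
equality iff `S` equals `log W` plus a constant off the diagonal. -/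
theorem statement0 {n : ℕ} (hn : 2 ≤ n) (W : Matrix (Fin n) (Fin n) ℝ)
    (hWsymm : W.IsSymm) (hWpos : ∀ i j : Fin n, i ≠ j → 0 < W i j)
    (S : Matrix (Fin n) (Fin n) ℝ) (hSsymm : S.IsSymm) :
    entropicBound W ≤ infoNCE W S ∧
      (infoNCE W S = entropicBound W ↔
        ∃ c : ℝ, ∀ i j : Fin n, i ≠ j → S i j = Real.log (W i j) + c) := by
  have hrow : ∀ i, ∀ j ∈ univ.erase i, 0 < W i j :=
    fun i j hj => hWpos i j (ne_of_mem_erase hj).symm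
  have hscale : -(1 / (n : ℝ)) ≠ 0 := by
    have : (n : ℝ) ≠ 0 := by norm_cast; omega
    simpa using this
  unfold infoNCE entropicBound
  refine ⟨?_, ?_⟩
  · refine mul_le_mul_of_nonpos_left
      (sum_le_sum fun i _ => sum_mul_log_softmax_le (hrow i) (S i)) ?_
    simp only [one_div, neg_nonpos, inv_nonneg, Nat.cast_nonneg]
  · rw [mul_right_inj' hscale,
      sum_eq_sum_iff_of_le fun i _ => sum_mul_log_softmax_le (hrow i) (S i)]
    simp only [mem_univ, true_implies, sum_mul_log_softmax_eq_iff (hrow _), mem_erase, ne_comm,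
      and_true]
    exact hSsymm.exists_add_const_iff (hWsymm.map log)
end

section
/- Let n ≥ 2, q ≥ 1, let D = (d_{ij}) be a symmetric n×n real matrix, and set w_{ij} = exp(-d_{ij}). For points z_1,…,z_n ∈ ℝ^q let S_Z be the symmetric matrix with entries s_{ij} = -‖z_i - z_j‖². Then L_W(S_Z) = H(W) (the entropic lower bound is attained at Z) if and only if there exists a constant c ∈ ℝ such that ‖z_i - z_j‖² = d_{ij} + c for all i ≠ j. -/
open scoped BigOperators

private lemma gibbs_term_le {p q : ℝ} (hp : 0 < p) (hq : 0 < q) :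
    p * Real.log q ≤ p * Real.log p + (q - p) := by
  have h1 : Real.log q = Real.log p + Real.log (q / p) := by
    rw [Real.log_div hq.ne' hp.ne']; ring
  have h2 : Real.log (q / p) ≤ q / p - 1 :=
    Real.log_le_sub_one_of_pos (div_pos hq hp)
  have h3 : p * Real.log (q / p) ≤ q - p := by
    calc p * Real.log (q / p) ≤ p * (q / p - 1) :=
          mul_le_mul_of_nonneg_left h2 hp.le
      _ = q - p := by field_simp
  rw [h1, mul_add]; linarith

private lemma gibbs_term_lt {p q : ℝ} (hp : 0 < p) (hq : 0 < q) (hne : q ≠ p) :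
    p * Real.log q < p * Real.log p + (q - p) := by
  have h1 : Real.log q = Real.log p + Real.log (q / p) := by
    rw [Real.log_div hq.ne' hp.ne']; ring
  have h2 : Real.log (q / p) < q / p - 1 := by
    apply Real.log_lt_sub_one_of_pos (div_pos hq hp)
    intro h
    apply hne
    field_simp at h
    linarith
  have h3 : p * Real.log (q / p) < q - p := by
    calc p * Real.log (q / p) < p * (q / p - 1) :=
          (mul_lt_mul_iff_right₀ hp).mpr h2
      _ = q - p := by field_simp
  rw [h1, mul_add]; linarith

private lemma gibbs_le {α : Type*} (s : Finset α) (p q : α → ℝ)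
    (hp : ∀ j ∈ s, 0 < p j) (hq : ∀ j ∈ s, 0 < q j)
    (hsum : ∑ j ∈ s, q j = ∑ j ∈ s, p j) :
    ∑ j ∈ s, p j * Real.log (q j) ≤ ∑ j ∈ s, p j * Real.log (p j) := by
  calc ∑ j ∈ s, p j * Real.log (q j)
      ≤ ∑ j ∈ s, (p j * Real.log (p j) + (q j - p j)) :=
        Finset.sum_le_sum fun j hj => gibbs_term_le (hp j hj) (hq j hj)
    _ = ∑ j ∈ s, p j * Real.log (p j) := by
        rw [Finset.sum_add_distrib, Finset.sum_sub_distrib, hsum]; ring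

private lemma gibbs_eq_iff {α : Type*} (s : Finset α) (p q : α → ℝ)
    (hp : ∀ j ∈ s, 0 < p j) (hq : ∀ j ∈ s, 0 < q j)
    (hsum : ∑ j ∈ s, q j = ∑ j ∈ s, p j) :
    (∑ j ∈ s, p j * Real.log (q j) = ∑ j ∈ s, p j * Real.log (p j)) ↔
      ∀ j ∈ s, q j = p j := by
  constructor
  · intro h
    by_contra hc
    push_neg at hc
    obtain ⟨j0, hj0, hne⟩ := hc
    have hlt : ∑ j ∈ s, p j * Real.log (q j)
        < ∑ j ∈ s, (p j * Real.log (p j) + (q j - p j)) :=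
      Finset.sum_lt_sum (fun j hj => gibbs_term_le (hp j hj) (hq j hj))
        ⟨j0, hj0, gibbs_term_lt (hp j0 hj0) (hq j0 hj0) hne⟩
    have heq : ∑ j ∈ s, (p j * Real.log (p j) + (q j - p j))
        = ∑ j ∈ s, p j * Real.log (p j) := by
      rw [Finset.sum_add_distrib, Finset.sum_sub_distrib, hsum]; ring
    rw [heq] at hlt
    exact absurd h (ne_of_lt hlt)
  · intro h
    exact Finset.sum_congr rfl fun j hj => by rw [h j hj]

/-- with `w_{ij} = exp(-d_{ij})` and `s_{ij} = -‖z_i - z_j‖²`, the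
entropic lower bound is attained at `Z` iff `‖z_i - z_j‖² = d_{ij} + c` for some
constant `c` and all `i ≠ j`. -/
theorem statement1 {n q : ℕ} (hn : 2 ≤ n) (hq : 1 ≤ q)
    (D : Matrix (Fin n) (Fin n) ℝ) (hD : D.IsSymm)
    (z : Fin n → EuclideanSpace ℝ (Fin q)) :
    infoNCE (Matrix.of fun i j => Real.exp (-(D i j)))
        (Matrix.of fun i j => -‖z i - z j‖ ^ 2)
      = entropicBound (Matrix.of fun i j => Real.exp (-(D i j))) ↔
    ∃ c : ℝ, ∀ i j : Fin n, i ≠ j → ‖z i - z j‖ ^ 2 = D i j + c := by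
  classical
  let w : Fin n → Fin n → ℝ := fun i j => Real.exp (-(D i j))
  let e : Fin n → Fin n → ℝ := fun i j => Real.exp (-(‖z i - z j‖ ^ 2))
  let Wi : Fin n → ℝ := fun i => ∑ k ∈ Finset.univ.erase i, w i k
  let Qi : Fin n → ℝ := fun i => ∑ k ∈ Finset.univ.erase i, e i k
  have hner : ∀ i : Fin n, (Finset.univ.erase i).Nonempty := by
    intro i
    apply Finset.card_pos.mp
    rw [Finset.card_erase_of_mem (Finset.mem_univ i), Finset.card_univ, Fintype.card_fin]
    omega
  have hWipos : ∀ i, 0 < Wi i := fun i =>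
    Finset.sum_pos (fun k _ => Real.exp_pos _) (hner i)
  have hQipos : ∀ i, 0 < Qi i := fun i =>
    Finset.sum_pos (fun k _ => Real.exp_pos _) (hner i)
  let p : Fin n → Fin n → ℝ := fun i j => w i j / Wi i
  let qq : Fin n → Fin n → ℝ := fun i j => e i j / Qi i
  have hppos : ∀ i j, 0 < p i j := fun i j => div_pos (Real.exp_pos _) (hWipos i)
  have hqpos : ∀ i j, 0 < qq i j := fun i j => div_pos (Real.exp_pos _) (hQipos i)
  have hpsum : ∀ i, ∑ j ∈ Finset.univ.erase i, p i j = 1 := by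
    intro i
    show (∑ j ∈ Finset.univ.erase i, w i j / Wi i) = 1
    rw [← Finset.sum_div, div_self (hWipos i).ne']
  have hqsum : ∀ i, ∑ j ∈ Finset.univ.erase i, qq i j = 1 := by
    intro i
    show (∑ j ∈ Finset.univ.erase i, e i j / Qi i) = 1
    rw [← Finset.sum_div, div_self (hQipos i).ne']
  have hL : infoNCE (Matrix.of fun i j => Real.exp (-(D i j)))
      (Matrix.of fun i j => -‖z i - z j‖ ^ 2)
      = -(1 / (n : ℝ)) * ∑ i : Fin n, ∑ j ∈ Finset.univ.erase i,
          p i j * Real.log (qq i j) := rfl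
  have hH : entropicBound (Matrix.of fun i j => Real.exp (-(D i j)))
      = -(1 / (n : ℝ)) * ∑ i : Fin n, ∑ j ∈ Finset.univ.erase i,
          p i j * Real.log (p i j) := rfl
  have hnR : (0:ℝ) < (n : ℝ) := by
    have : 0 < n := by omega
    exact_mod_cast this
  have hfac : -(1 / (n : ℝ)) ≠ 0 := neg_ne_zero.mpr (one_div_ne_zero hnR.ne')
  have hAleB : ∀ i ∈ (Finset.univ : Finset (Fin n)),
      ∑ j ∈ Finset.univ.erase i, p i j * Real.log (qq i j)
        ≤ ∑ j ∈ Finset.univ.erase i, p i j * Real.log (p i j) := by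
    intro i _
    exact gibbs_le _ _ _ (fun j _ => hppos i j) (fun j _ => hqpos i j)
      (by rw [hpsum i, hqsum i])
  have key : (infoNCE (Matrix.of fun i j => Real.exp (-(D i j)))
        (Matrix.of fun i j => -‖z i - z j‖ ^ 2)
      = entropicBound (Matrix.of fun i j => Real.exp (-(D i j))))
      ↔ ∀ i : Fin n, ∀ j, j ≠ i → qq i j = p i j := by
    rw [hL, hH, mul_right_inj' hfac, Finset.sum_eq_sum_iff_of_le hAleB]
    constructor
    · intro h i j hji
      exact (gibbs_eq_iff _ _ _ (fun k _ => hppos i k) (fun k _ => hqpos i k)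
          (by rw [hpsum i, hqsum i])).mp (h i (Finset.mem_univ i)) j
        (Finset.mem_erase.mpr ⟨hji, Finset.mem_univ j⟩)
    · intro h i _
      exact (gibbs_eq_iff _ _ _ (fun k _ => hppos i k) (fun k _ => hqpos i k)
          (by rw [hpsum i, hqsum i])).mpr
        (fun j hj => h i j (Finset.mem_erase.mp hj).1)
  rw [key]
  constructor
  · intro h
    have key2 : ∀ i j : Fin n, i ≠ j →
        ‖z i - z j‖ ^ 2 = D i j + (Real.log (Wi i) - Real.log (Qi i)) := by
      intro i j hij
      have hq1 := h i j (Ne.symm hij)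
      have hq2 : Real.log (e i j / Qi i) = Real.log (w i j / Wi i) := congrArg Real.log hq1
      rw [Real.log_div (Real.exp_pos _).ne' (hQipos i).ne',
          Real.log_div (Real.exp_pos _).ne' (hWipos i).ne',
          Real.log_exp, Real.log_exp] at hq2
      linarith
    have hconst : ∀ i j : Fin n, i ≠ j →
        Real.log (Wi i) - Real.log (Qi i) = Real.log (Wi j) - Real.log (Qi j) := by
      intro i j hij
      have h1 := key2 i j hij
      have h2 := key2 j i (Ne.symm hij)
      have h3 : ‖z i - z j‖ = ‖z j - z i‖ := norm_sub_rev _ _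
      have h4 : D j i = D i j := hD.apply i j
      rw [h3] at h1
      linarith
    refine ⟨Real.log (Wi ⟨0, by omega⟩) - Real.log (Qi ⟨0, by omega⟩), ?_⟩
    intro i j hij
    rw [key2 i j hij]
    rcases eq_or_ne i ⟨0, by omega⟩ with h0 | h0
    · rw [h0]
    · rw [hconst i ⟨0, by omega⟩ h0]
  · rintro ⟨c, hc⟩ i j hji
    have hQW : Qi i = Real.exp (-c) * Wi i := by
      show (∑ k ∈ Finset.univ.erase i, e i k) = _
      rw [Finset.mul_sum]
      refine Finset.sum_congr rfl fun k hk => ?_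
      have hik : i ≠ k := fun h' => (Finset.mem_erase.mp hk).1 h'.symm
      show Real.exp (-(‖z i - z k‖ ^ 2)) = Real.exp (-c) * Real.exp (-(D i k))
      rw [hc i k hik, ← Real.exp_add]
      congr 1
      ring
    show e i j / Qi i = w i j / Wi i
    have hej : e i j = Real.exp (-c) * w i j := by
      show Real.exp (-(‖z i - z j‖ ^ 2)) = Real.exp (-c) * Real.exp (-(D i j))
      rw [hc i j (Ne.symm hji), ← Real.exp_add]
      congr 1
      ring
    rw [hej, hQW, mul_div_mul_left _ _ (Real.exp_ne_zero _)]
end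

section
/- Let n ≥ 2, q ≥ 1, τ > 0, let D = (d_{ij}) be a symmetric n×n real matrix, and set w_{ij} = exp(-d_{ij}). For nonzero points z_1,…,z_n ∈ ℝ^q let S_Z be the symmetric matrix with entries s_{ij} = cos(z_i, z_j)/τ. Then L_W(S_Z) = H(W) (the entropic lower bound is attained at Z) if and only if there exists a constant c' ∈ ℝ such that cos(z_i, z_j) = -τ·d_{ij} + c' for all i ≠ j. -/
open scoped BigOperators

/-- Cosine similarity of two vectors of `ℝ^q`. -/
noncomputable def cosSim {q : ℕ} (u v : EuclideanSpace ℝ (Fin q)) : ℝ :=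
  (inner ℝ u v : ℝ) / (‖u‖ * ‖v‖)

lemma cosSim_comm {q : ℕ} (u v : EuclideanSpace ℝ (Fin q)) :
    cosSim u v = cosSim v u := by
  unfold cosSim
  rw [real_inner_comm, mul_comm]

/-- Gibbs' inequality with equality condition, for finite sums. -/
lemma gibbs_aux {ι : Type*} (F : Finset ι) (p q : ι → ℝ)
    (hp : ∀ j ∈ F, 0 < p j) (hq : ∀ j ∈ F, 0 < q j)
    (hps : ∑ j ∈ F, p j = 1) (hqs : ∑ j ∈ F, q j = 1) :
    (∑ j ∈ F, p j * Real.log (q j) ≤ ∑ j ∈ F, p j * Real.log (p j)) ∧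
      ((∑ j ∈ F, p j * Real.log (q j) = ∑ j ∈ F, p j * Real.log (p j)) ↔
        ∀ j ∈ F, p j = q j) := by
  set g : ι → ℝ := fun j =>
    (q j - p j) - (p j * Real.log (q j) - p j * Real.log (p j)) with hg
  have key : ∀ j ∈ F, 0 ≤ g j ∧ (g j = 0 ↔ p j = q j) := by
    intro j hj
    have hpj := hp j hj; have hqj := hq j hj
    have hratio : 0 < q j / p j := div_pos hqj hpj
    have h3 : p j * Real.log (q j / p j)
        = p j * Real.log (q j) - p j * Real.log (p j) := by
      rw [Real.log_div hqj.ne' hpj.ne']; ring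
    have h2 : p j * (q j / p j - 1) = q j - p j := by field_simp
    constructor
    · have h1 : p j * Real.log (q j / p j) ≤ p j * (q j / p j - 1) :=
        mul_le_mul_of_nonneg_left (Real.log_le_sub_one_of_pos hratio) hpj.le
      simp only [hg]; linarith
    · constructor
      · intro h0
        by_contra hne
        have hne1 : q j / p j ≠ 1 := by
          intro h; exact hne ((div_eq_one_iff_eq hpj.ne').mp h).symm
        have h1 : p j * Real.log (q j / p j) < p j * (q j / p j - 1) :=
          mul_lt_mul_of_pos_left (Real.log_lt_sub_one_of_pos hratio hne1) hpj
        simp only [hg] at h0; linarith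
      · intro h; simp only [hg, h]; ring
  have hsum : ∑ j ∈ F, g j
      = ∑ j ∈ F, p j * Real.log (p j) - ∑ j ∈ F, p j * Real.log (q j) := by
    simp only [hg, Finset.sum_sub_distrib, hps, hqs]; ring
  have hnn : ∀ j ∈ F, 0 ≤ g j := fun j hj => (key j hj).1
  constructor
  · have h := Finset.sum_nonneg hnn
    rw [hsum] at h; linarith
  · constructor
    · intro h
      have h0 : ∑ j ∈ F, g j = 0 := by rw [hsum, h]; ring
      intro j hj
      exact ((key j hj).2).mp (((Finset.sum_eq_zero_iff_of_nonneg hnn).mp h0) j hj)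
    · intro h
      have h0 : ∑ j ∈ F, g j = 0 :=
        Finset.sum_eq_zero fun j hj => ((key j hj).2).mpr (h j hj)
      rw [hsum] at h0; linarith

/-- with `w_{ij} = exp(-d_{ij})` and `s_{ij} = cos(z_i, z_j)/τ`, the
entropic lower bound is attained at `Z` iff `cos(z_i, z_j) = -τ d_{ij} + c'` for some
constant `c'` and all `i ≠ j`. -/
theorem statement2 {n q : ℕ} (hn : 2 ≤ n) (hq : 1 ≤ q) (τ : ℝ) (hτ : 0 < τ)
    (D : Matrix (Fin n) (Fin n) ℝ) (hD : D.IsSymm)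
    (z : Fin n → EuclideanSpace ℝ (Fin q)) (hz : ∀ i, z i ≠ 0) :
    infoNCE (Matrix.of fun i j => Real.exp (-(D i j)))
        (Matrix.of fun i j => cosSim (z i) (z j) / τ)
      = entropicBound (Matrix.of fun i j => Real.exp (-(D i j))) ↔
    ∃ c' : ℝ, ∀ i j : Fin n, i ≠ j → cosSim (z i) (z j) = -(τ * D i j) + c' := by
  classical
  set s : Fin n → Fin n → ℝ := fun i j => cosSim (z i) (z j) / τ with hs
  set w : Fin n → Fin n → ℝ := fun i j => Real.exp (-(D i j)) with hw
  set Wi : Fin n → ℝ := fun i => ∑ k ∈ Finset.univ.erase i, w i k with hWi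
  set Zi : Fin n → ℝ := fun i => ∑ k ∈ Finset.univ.erase i, Real.exp (s i k) with hZi
  have herase : ∀ i : Fin n, (Finset.univ.erase i).Nonempty := by
    intro i
    have hcard : 1 < (Finset.univ : Finset (Fin n)).card := by
      simpa using lt_of_lt_of_le (by norm_num) hn
    obtain ⟨j, hjm, hjne⟩ := Finset.exists_mem_ne hcard i
    exact ⟨j, Finset.mem_erase.mpr ⟨hjne, hjm⟩⟩
  have hWipos : ∀ i, 0 < Wi i := fun i =>
    Finset.sum_pos (fun k _ => Real.exp_pos _) (herase i)
  have hZipos : ∀ i, 0 < Zi i := fun i =>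
    Finset.sum_pos (fun k _ => Real.exp_pos _) (herase i)
  set p : Fin n → Fin n → ℝ := fun i j => w i j / Wi i with hp
  set qd : Fin n → Fin n → ℝ := fun i j => Real.exp (s i j) / Zi i with hqd
  have hppos : ∀ i : Fin n, ∀ j ∈ Finset.univ.erase i, 0 < p i j := fun i j _ =>
    div_pos (Real.exp_pos _) (hWipos i)
  have hqpos : ∀ i : Fin n, ∀ j ∈ Finset.univ.erase i, 0 < qd i j := fun i j _ =>
    div_pos (Real.exp_pos _) (hZipos i)
  have hpsum : ∀ i, ∑ j ∈ Finset.univ.erase i, p i j = 1 := by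
    intro i
    simp only [hp, ← Finset.sum_div]
    exact div_self (hWipos i).ne'
  have hqsum : ∀ i, ∑ j ∈ Finset.univ.erase i, qd i j = 1 := by
    intro i
    simp only [hqd, ← Finset.sum_div]
    exact div_self (hZipos i).ne'
  have hgibbs := fun i =>
    gibbs_aux (Finset.univ.erase i) (p i) (qd i) (hppos i) (hqpos i) (hpsum i) (hqsum i)
  -- Step 1: loss equality ↔ p = qd pointwise
  have step1 : (infoNCE (Matrix.of fun i j => Real.exp (-(D i j)))
        (Matrix.of fun i j => cosSim (z i) (z j) / τ)
      = entropicBound (Matrix.of fun i j => Real.exp (-(D i j)))) ↔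
      ∀ i : Fin n, ∀ j ∈ Finset.univ.erase i, p i j = qd i j := by
    have hn0 : -(1 / (n : ℝ)) ≠ 0 := by
      have : (0:ℝ) < n := by
        have : 0 < n := by omega
        exact_mod_cast this
      simp
      positivity
    have hA : infoNCE (Matrix.of fun i j => Real.exp (-(D i j)))
        (Matrix.of fun i j => cosSim (z i) (z j) / τ)
        = -(1 / (n : ℝ)) * ∑ i : Fin n, ∑ j ∈ Finset.univ.erase i,
            p i j * Real.log (qd i j) := by
      simp only [infoNCE, Matrix.of_apply, hp, hqd, hw, hWi, hZi, hs]
    have hB : entropicBound (Matrix.of fun i j => Real.exp (-(D i j)))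
        = -(1 / (n : ℝ)) * ∑ i : Fin n, ∑ j ∈ Finset.univ.erase i,
            p i j * Real.log (p i j) := by
      simp only [entropicBound, Matrix.of_apply, hp, hw, hWi]
    rw [hA, hB, mul_right_inj' hn0]
    rw [Finset.sum_eq_sum_iff_of_le (fun i _ => (hgibbs i).1)]
    constructor
    · intro h i j hj
      exact ((hgibbs i).2.mp (h i (Finset.mem_univ i))) j hj
    · intro h i _
      exact (hgibbs i).2.mpr (h i)
  rw [step1]
  -- Step 2: translate pointwise equality into the affine condition
  have hpq_iff : ∀ i j : Fin n, j ≠ i →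
      (p i j = qd i j ↔ s i j = -(D i j) + (Real.log (Zi i) - Real.log (Wi i))) := by
    intro i j hj
    constructor
    · intro h
      have hlog : Real.log (p i j) = Real.log (qd i j) := by rw [h]
      have h1 : Real.log (p i j) = -(D i j) - Real.log (Wi i) := by
        simp only [hp, hw]
        rw [Real.log_div (Real.exp_ne_zero _) (hWipos i).ne', Real.log_exp]
      have h2 : Real.log (qd i j) = s i j - Real.log (Zi i) := by
        simp only [hqd]
        rw [Real.log_div (Real.exp_ne_zero _) (hZipos i).ne', Real.log_exp]
      rw [h1, h2] at hlog
      linarith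
    · intro h
      have hZ : Real.exp (Real.log (Zi i) - Real.log (Wi i)) = Zi i / Wi i := by
        rw [Real.exp_sub, Real.exp_log (hZipos i), Real.exp_log (hWipos i)]
      simp only [hp, hqd, hw, h, Real.exp_add, hZ]
      rw [div_eq_div_iff (hWipos i).ne' (hZipos i).ne']
      field_simp
      rw [mul_div_cancel_right₀ _ (hWipos i).ne']
  constructor
  · intro h
    set c0 : Fin n → ℝ := fun i => Real.log (Zi i) - Real.log (Wi i) with hc0
    have hrel : ∀ i j : Fin n, i ≠ j → s i j = -(D i j) + c0 i := by
      intro i j hij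
      exact (hpq_iff i j hij.symm).mp
        (h i j (Finset.mem_erase.mpr ⟨hij.symm, Finset.mem_univ j⟩))
    have hssymm : ∀ i j : Fin n, s i j = s j i := by
      intro i j; simp only [hs, cosSim_comm]
    have hconst : ∀ i j : Fin n, i ≠ j → c0 i = c0 j := by
      intro i j hij
      have h1 := hrel i j hij
      have h2 := hrel j i hij.symm
      have hDsym : D j i = D i j := hD.apply i j
      rw [hssymm i j] at h1
      rw [hDsym] at h2
      linarith
    set i0 : Fin n := ⟨0, by omega⟩ with hi0
    refine ⟨τ * c0 i0, ?_⟩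
    intro i j hij
    have hci : c0 i = c0 i0 := by
      by_cases hii : i = i0
      · rw [hii]
      · exact hconst i i0 hii
    have := hrel i j hij
    have hcos : cosSim (z i) (z j) = τ * s i j := by
      simp only [hs]
      field_simp
    rw [hcos, this, hci]
    ring
  · rintro ⟨c', hc⟩ i j hj
    have hji : i ≠ j := (Finset.mem_erase.mp hj).1.symm
    refine (hpq_iff i j (Finset.mem_erase.mp hj).1).mpr ?_
    -- show s i j = -(D i j) + (log Zi - log Wi), using Zi = exp(c'/τ) * Wi
    have hsval : ∀ k : Fin n, i ≠ k → s i k = -(D i k) + c' / τ := by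
      intro k hk
      simp only [hs, hc i k hk]
      field_simp
    have hZW : Zi i = Real.exp (c' / τ) * Wi i := by
      simp only [hZi, hWi, Finset.mul_sum]
      refine Finset.sum_congr rfl fun k hk => ?_
      rw [hsval k (Finset.mem_erase.mp hk).1.symm]
      rw [hw]
      rw [← Real.exp_add]
      ring_nf
    have hlogZ : Real.log (Zi i) = c' / τ + Real.log (Wi i) := by
      rw [hZW, Real.log_mul (Real.exp_ne_zero _) (hWipos i).ne', Real.log_exp]
    rw [hlogZ, hsval j hji]
    ring
end

section
/- Let W be a well-conditioned n×n matrix: symmetric, with w_{ij} ≥ 0 for all i ≠ j and Σ_{k≠i} w_{ik} > 0 for each i. If (S^{(m)})_{m∈ℕ} is a sequence of symmetric n×n real matrices such that exp(s^{(m)}_{ij}) → w_{ij} as m → ∞ for every pair i ≠ j, then L_W(S^{(m)}) → H(W) as m → ∞. -/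
open scoped BigOperators

/-- if `exp(S^{(m)}) → W` entrywise off the diagonal, then
`L_W(S^{(m)}) → H(W)`. -/
theorem statement10 {n : ℕ} (W : Matrix (Fin n) (Fin n) ℝ) (hWsymm : W.IsSymm)
    (hWnn : ∀ i j : Fin n, i ≠ j → 0 ≤ W i j)
    (hWwc : ∀ i : Fin n, 0 < ∑ k ∈ Finset.univ.erase i, W i k)
    (S : ℕ → Matrix (Fin n) (Fin n) ℝ) (hSsymm : ∀ m, (S m).IsSymm)
    (hconv : ∀ i j : Fin n, i ≠ j →
      Filter.Tendsto (fun m => Real.exp (S m i j)) Filter.atTop (nhds (W i j))) :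
    Filter.Tendsto (fun m => infoNCE W (S m)) Filter.atTop (nhds (entropicBound W)) := by
  unfold infoNCE entropicBound
  apply Filter.Tendsto.const_mul
  apply tendsto_finset_sum
  intro i _
  apply tendsto_finset_sum
  intro j hj
  have hji : i ≠ j := (Finset.ne_of_mem_erase hj).symm
  rcases eq_or_lt_of_le (hWnn i j hji) with h0 | hpos
  · simp [← h0]
  · apply Filter.Tendsto.const_mul
    apply Filter.Tendsto.log
    · exact Filter.Tendsto.div (hconv i j hji)
        (tendsto_finset_sum _ (fun k hk => hconv i k (Finset.ne_of_mem_erase hk).symm))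
        (hWwc i).ne'
    · exact div_ne_zero hpos.ne' (hWwc i).ne'
end

section
/- Let W be SupCon-like for a partition of {1,…,n} into C classes of sizes ℓ_1,…,ℓ_C ≥ 2, let τ > 0, and let 𝒮₀ be the set of n×n matrices of the form G/τ with G symmetric positive semidefinite with unit diagonal. Then for every S ∈ 𝒮₀ there exists S' ∈ 𝒮₀ which is W-symmetric and satisfies L_W(S') ≤ L_W(S). -/
open scoped BigOperators

/-- SupCon-like weight matrix for the class assignment `cls`:
`w_{ij} = 1` if `i` and `j` are in the same class and `0` otherwise. -/
def supconW {n C : ℕ} (cls : Fin n → Fin C) : Matrix (Fin n) (Fin n) ℝ :=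
  Matrix.of fun i j => if cls i = cls j then 1 else 0

/-- Action of a permutation on a matrix: `(σX)_{ij} = X_{σ(i)σ(j)}`. -/
def permMat {n : ℕ} (σ : Equiv.Perm (Fin n)) (X : Matrix (Fin n) (Fin n) ℝ) :
    Matrix (Fin n) (Fin n) ℝ :=
  Matrix.of fun i j => X (σ i) (σ j)

/-- `S` is `W`-symmetric: every permutation fixing `W` fixes `S`. -/
def WSymmetric {n : ℕ} (W S : Matrix (Fin n) (Fin n) ℝ) : Prop :=
  ∀ σ : Equiv.Perm (Fin n), permMat σ W = W → permMat σ S = S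

/-- The size of class `c` under the assignment `cls`. -/
def classSize {n C : ℕ} (cls : Fin n → Fin C) (c : Fin C) : ℕ :=
  (Finset.univ.filter fun i => cls i = c).card

/-- The set `𝒮₀` of matrices of the form `G/τ` with `G` symmetric PSD with unit
diagonal (i.e. a cosine matrix). -/
def gramSet (n : ℕ) (τ : ℝ) : Set (Matrix (Fin n) (Fin n) ℝ) :=
  {S | ∃ G : Matrix (Fin n) (Fin n) ℝ,
    G.PosSemidef ∧ (∀ i, G i i = 1) ∧ S = τ⁻¹ • G}

/-- The set `𝒮` of matrices of the form `G/τ` with `G` symmetric PSD with unit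
diagonal and rank at most `q`. -/
def gramSetRank (n q : ℕ) (τ : ℝ) : Set (Matrix (Fin n) (Fin n) ℝ) :=
  {S | ∃ G : Matrix (Fin n) (Fin n) ℝ,
    G.PosSemidef ∧ (∀ i, G i i = 1) ∧ G.rank ≤ q ∧ S = τ⁻¹ • G}

/-!
Average `S` over the group of permutations fixing `W`. The average is `W`-symmetric because
right multiplication permutes that group. It stays in `𝒮₀` because `𝒮₀` is convex and closed
under simultaneous permutation of rows and columns. Its loss is no larger by Jensen: `L_W` is
convex in `S` (row by row it is a nonnegative combination of log-sum-exp minus a linear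
function) and takes the same value at every permuted copy of `S`.
-/

open Finset Real

theorem convexOn_finset_sum {ι E : Type*} [AddCommMonoid E] [Module ℝ E] {s : Set E}
    (hs : Convex ℝ s) (t : Finset ι) {f : ι → E → ℝ} (hf : ∀ i ∈ t, ConvexOn ℝ s (f i)) :
    ConvexOn ℝ s (fun x => ∑ i ∈ t, f i x) := by
  classical
  induction t using Finset.induction_on with
  | empty => simpa using convexOn_const (0 : ℝ) hs
  | insert a t ha ih =>
    simp only [sum_insert ha]
    exact (hf a (mem_insert_self a t)).add (ih fun i hi => hf i (mem_insert_of_mem hi))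

/-- With `P = ∑ exp x_k`, `Q = ∑ exp y_k` and `exp L = P^a Q^b`, convexity of `exp` gives
`exp (a x_k + b y_k) ≤ exp L * (a exp x_k / P + b exp y_k / Q)`, and these sum to `exp L`. -/
theorem convexOn_log_sum_exp {ι : Type*} (s : Finset ι) (hs : s.Nonempty) :
    ConvexOn ℝ Set.univ (fun v : ι → ℝ => log (∑ k ∈ s, exp (v k))) := by
  refine ⟨convex_univ, fun x _ y _ a b ha hb hab => ?_⟩
  set P := ∑ k ∈ s, exp (x k)
  set Q := ∑ k ∈ s, exp (y k)
  have hP : 0 < P := sum_pos (fun _ _ => exp_pos _) hs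
  have hQ : 0 < Q := sum_pos (fun _ _ => exp_pos _) hs
  set L := a * log P + b * log Q
  have hterm (k : ι) :
      exp ((a • x + b • y) k) ≤ exp L * (a * (exp (x k) / P) + b * (exp (y k) / Q)) :=
    calc exp ((a • x + b • y) k)
        = exp L * exp (a • (x k - log P) + b • (y k - log Q)) := by
          rw [← exp_add]; simp only [Pi.add_apply, Pi.smul_apply, smul_eq_mul, L]; ring_nf
      _ ≤ exp L * (a • exp (x k - log P) + b • exp (y k - log Q)) :=
          mul_le_mul_of_nonneg_left (convexOn_exp.2 trivial trivial ha hb hab) (exp_pos L).le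
      _ = exp L * (a * (exp (x k) / P) + b * (exp (y k) / Q)) := by
          simp only [exp_sub, exp_log hP, exp_log hQ, smul_eq_mul]
  have hsum : ∑ k ∈ s, exp ((a • x + b • y) k) ≤ exp L :=
    calc ∑ k ∈ s, exp ((a • x + b • y) k)
        ≤ ∑ k ∈ s, exp L * (a * (exp (x k) / P) + b * (exp (y k) / Q)) :=
          sum_le_sum fun k _ => hterm k
      _ = exp L * (a * (P / P) + b * (Q / Q)) := by
          simp only [← mul_sum, sum_add_distrib, ← sum_div, P, Q]
      _ = exp L := by rw [div_self hP.ne', div_self hQ.ne', mul_one, mul_one, hab, mul_one]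
  rw [log_le_iff_le_exp (sum_pos (fun _ _ => exp_pos _) hs)]
  simpa only [smul_eq_mul] using hsum

section Loss

variable {n : ℕ} (W : Matrix (Fin n) (Fin n) ℝ)

theorem infoNCE_eq_sum_log_sum_exp_sub (S : Matrix (Fin n) (Fin n) ℝ) :
    infoNCE W S = (1 / (n : ℝ)) * ∑ i, ∑ j ∈ univ.erase i,
      (W i j / ∑ k ∈ univ.erase i, W i k) *
        (log (∑ k ∈ univ.erase i, exp (S i k)) - S i j) := by
  rw [infoNCE, neg_mul, ← mul_neg, ← sum_neg_distrib]
  congr 1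
  refine sum_congr rfl fun i _ => ?_
  rw [← sum_neg_distrib]
  refine sum_congr rfl fun j hj => ?_
  have hpos : 0 < ∑ k ∈ univ.erase i, exp (S i k) := sum_pos (fun _ _ => exp_pos _) ⟨j, hj⟩
  rw [log_div (exp_ne_zero _) hpos.ne', log_exp]
  ring

theorem convexOn_infoNCE (hW : ∀ i j, i ≠ j → 0 ≤ W i j) : ConvexOn ℝ Set.univ (infoNCE W) := by
  rw [funext (infoNCE_eq_sum_log_sum_exp_sub W)]
  refine (convexOn_finset_sum convex_univ _ fun i _ =>
    convexOn_finset_sum convex_univ _ fun j hj => ?_).smul (by positivity)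
  have hweight : 0 ≤ W i j / ∑ k ∈ univ.erase i, W i k :=
    div_nonneg (hW i j (ne_of_mem_erase hj).symm)
      (sum_nonneg fun k hk => hW i k (ne_of_mem_erase hk).symm)
  have hrow : ConvexOn ℝ Set.univ fun S : Matrix (Fin n) (Fin n) ℝ =>
      log (∑ k ∈ univ.erase i, exp (S i k)) := by
    simpa [Function.comp_def] using (convexOn_log_sum_exp _ ⟨j, hj⟩).comp_linearMap
      ((LinearMap.proj i : (Fin n → Fin n → ℝ) →ₗ[ℝ] Fin n → ℝ) ∘ₗ
        (Matrix.ofLinearEquiv ℝ).symm.toLinearMap)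
  exact (hrow.sub ((Matrix.entryLinearMap ℝ ℝ i j).concaveOn convex_univ)).smul hweight

theorem infoNCE_permMat {σ : Equiv.Perm (Fin n)} (hσ : permMat σ W = W)
    (S : Matrix (Fin n) (Fin n) ℝ) : infoNCE W (permMat σ S) = infoNCE W S := by
  have hWσ (i j : Fin n) : W (σ i) (σ j) = W i j := congrFun (congrFun hσ i) j
  have hsum (i : Fin n) (f : Fin n → ℝ) :
      ∑ k ∈ univ.erase (σ i), f k = ∑ k ∈ univ.erase i, f (σ k) :=
    (sum_equiv σ (by simp) fun _ _ => rfl).symm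
  rw [infoNCE, infoNCE]
  conv_rhs => rw [← Equiv.sum_comp σ]
  simp only [permMat, Matrix.of_apply, hsum, hWσ]

end Loss

theorem convex_gramSet (n : ℕ) (τ : ℝ) : Convex ℝ (gramSet n τ) := by
  rintro _ ⟨G₁, hG₁, hdiag₁, rfl⟩ _ ⟨G₂, hG₂, hdiag₂, rfl⟩ a b ha hb hab
  refine ⟨a • G₁ + b • G₂, (hG₁.smul ha).add (hG₂.smul hb), fun i => ?_, ?_⟩
  · simp [hdiag₁, hdiag₂, hab]
  · rw [smul_add, smul_comm a, smul_comm b]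

theorem permMat_mem_gramSet {n : ℕ} {τ : ℝ} {S : Matrix (Fin n) (Fin n) ℝ}
    (hS : S ∈ gramSet n τ) (σ : Equiv.Perm (Fin n)) : permMat σ S ∈ gramSet n τ := by
  obtain ⟨G, hG, hdiag, rfl⟩ := hS
  exact ⟨G.submatrix σ σ, hG.submatrix σ, fun i => hdiag (σ i), rfl⟩

section Symmetrization

open scoped Classical

variable {n : ℕ} (W : Matrix (Fin n) (Fin n) ℝ)

def permStabilizer : Subgroup (Equiv.Perm (Fin n)) where
  carrier := {σ | permMat σ W = W}
  mul_mem' {σ ρ} (hσ : permMat σ W = W) (hρ : permMat ρ W = W) := by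
    change permMat ρ (permMat σ W) = W
    rw [hσ, hρ]
  one_mem' := rfl
  inv_mem' {σ} (hσ : permMat σ W = W) := by
    change permMat σ⁻¹ W = W
    conv_lhs => rw [← hσ]
    exact congrArg (permMat · W) (mul_inv_cancel σ)

noncomputable def symmetrize (S : Matrix (Fin n) (Fin n) ℝ) : Matrix (Fin n) (Fin n) ℝ :=
  ∑ σ : permStabilizer W, (Fintype.card (permStabilizer W) : ℝ)⁻¹ • permMat σ S

theorem sum_inv_card_permStabilizer :
    ∑ _σ : permStabilizer W, (Fintype.card (permStabilizer W) : ℝ)⁻¹ = 1 := by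
  rw [sum_const, card_univ, nsmul_eq_mul, mul_inv_cancel₀ (Nat.cast_ne_zero.2 Fintype.card_ne_zero)]

theorem wSymmetric_symmetrize (S : Matrix (Fin n) (Fin n) ℝ) : WSymmetric W (symmetrize W S) := by
  intro ρ hρ
  ext i j
  simp only [symmetrize, permMat, Matrix.of_apply, Matrix.sum_apply, Matrix.smul_apply]
  exact Fintype.sum_equiv (Equiv.mulRight ⟨ρ, hρ⟩) _ _ fun σ => rfl

theorem symmetrize_mem {K : Set (Matrix (Fin n) (Fin n) ℝ)} (hK : Convex ℝ K)
    {S : Matrix (Fin n) (Fin n) ℝ} (hS : ∀ σ ∈ permStabilizer W, permMat σ S ∈ K) :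
    symmetrize W S ∈ K :=
  hK.sum_mem (fun _ _ => by positivity) (sum_inv_card_permStabilizer W) fun σ _ => hS σ σ.2

theorem ConvexOn.map_symmetrize_le {f : Matrix (Fin n) (Fin n) ℝ → ℝ} (hf : ConvexOn ℝ Set.univ f)
    {S : Matrix (Fin n) (Fin n) ℝ} (hfS : ∀ σ ∈ permStabilizer W, f (permMat σ S) = f S) :
    f (symmetrize W S) ≤ f S :=
  calc f (symmetrize W S)
      ≤ ∑ σ : permStabilizer W, (Fintype.card (permStabilizer W) : ℝ)⁻¹ • f (permMat σ S) :=
        hf.map_sum_le (fun _ _ => by positivity) (sum_inv_card_permStabilizer W) fun _ _ => trivial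
    _ = f S := by
        rw [sum_congr rfl fun σ _ => by rw [hfS σ σ.2], ← sum_smul, sum_inv_card_permStabilizer,
          one_smul]

end Symmetrization

theorem statement12_general {n C : ℕ} (cls : Fin n → Fin C)
    (τ : ℝ) (S : Matrix (Fin n) (Fin n) ℝ) (hS : S ∈ gramSet n τ) :
    ∃ S' ∈ gramSet n τ, WSymmetric (supconW cls) S' ∧
      infoNCE (supconW cls) S' ≤ infoNCE (supconW cls) S := by
  have hW : ∀ i j, i ≠ j → 0 ≤ supconW cls i j := fun i j _ => by
    rw [supconW, Matrix.of_apply]; split_ifs <;> norm_num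
  exact ⟨symmetrize _ S, symmetrize_mem _ (convex_gramSet n τ) fun σ _ => permMat_mem_gramSet hS σ,
    wSymmetric_symmetrize _ S,
    (convexOn_infoNCE _ hW).map_symmetrize_le _ fun σ hσ => infoNCE_permMat _ hσ S⟩

/-- symmetrization: for every `S ∈ 𝒮₀` there is a `W`-symmetric
`S' ∈ 𝒮₀` with `L_W(S') ≤ L_W(S)`. -/
theorem statement12 {n C : ℕ} (cls : Fin n → Fin C)
    (hsize : ∀ c : Fin C, 2 ≤ classSize cls c)
    (τ : ℝ) (hτ : 0 < τ) (S : Matrix (Fin n) (Fin n) ℝ) (hS : S ∈ gramSet n τ) :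
    ∃ S' ∈ gramSet n τ, WSymmetric (supconW cls) S' ∧
      infoNCE (supconW cls) S' ≤ infoNCE (supconW cls) S :=
  statement12_general cls τ S hS
end

section
/- Let W be SupCon-like for a partition of {1,…,n} into classes I_1,…,I_C of sizes ℓ_1,…,ℓ_C ≥ 2, and let S be a symmetric n×n W-symmetric real matrix. Then: (a) for any i ≠ j and i' ≠ j' such that i and i' lie in the same class and j and j' lie in the same class, s_{ij} = s_{i'j'} (so S is constant on each block up to diagonal elements); (b) if c ≠ c' and b ≠ b' are classes with ℓ_c = ℓ_b and ℓ_{c'} = ℓ_{b'}, then the common value of S on the off-diagonal block I_c × I_{c'} equals the common value on I_b × I_{b'}; (c) if ℓ_c = ℓ_{c'}, then the common off-diagonal value of S on the diagonal block I_c × I_c equals that on I_{c'} × I_{c'}. -/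
open scoped BigOperators

private lemma supconW_perm_inv {n C : ℕ} (cls : Fin n → Fin C) (σ : Equiv.Perm (Fin n))
    (f : Fin C → Fin C) (hf : Function.Injective f) (h : ∀ x, cls (σ x) = f (cls x)) :
    permMat σ (supconW cls) = supconW cls := by
  ext i j
  simp only [permMat, supconW, Matrix.of_apply, h, hf.eq_iff]

private lemma cls_swap {n C : ℕ} (cls : Fin n → Fin C) {a b : Fin n} (h : cls a = cls b)
    (x : Fin n) : cls (Equiv.swap a b x) = cls x := by
  rcases eq_or_ne x a with rfl | hxa
  · simp [Equiv.swap_apply_left, h]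
  rcases eq_or_ne x b with rfl | hxb
  · simp [Equiv.swap_apply_right, h]
  · simp [Equiv.swap_apply_of_ne_of_ne hxa hxb]

private lemma classSwap {n C : ℕ} (cls : Fin n → Fin C) (c b : Fin C)
    (hcb : classSize cls c = classSize cls b) :
    ∃ σ : Equiv.Perm (Fin n), ∀ x, cls (σ x) = Equiv.swap c b (cls x) := by
  classical
  rcases eq_or_ne c b with rfl | hne
  · exact ⟨1, fun x => by simp⟩
  set A := Finset.univ.filter (fun i => cls i = c) with hA
  set B := Finset.univ.filter (fun i => cls i = b) with hB
  have hcard : A.card = B.card := hcb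
  let e : {x // x ∈ A} ≃ {x // x ∈ B} := Finset.equivOfCardEq hcard
  have hmemA : ∀ (y : {x // x ∈ A}), cls (y : Fin n) = c := fun y =>
    (Finset.mem_filter.mp y.2).2
  have hmemB : ∀ (y : {x // x ∈ B}), cls (y : Fin n) = b := fun y =>
    (Finset.mem_filter.mp y.2).2
  let f : Fin n → Fin n := fun x =>
    if h1 : cls x = c then (e ⟨x, by simp [hA, h1]⟩ : Fin n)
    else if h2 : cls x = b then (e.symm ⟨x, by simp [hB, h2]⟩ : Fin n)
    else x
  have hfA : ∀ x (h1 : cls x = c), f x = (e ⟨x, by simp [hA, h1]⟩ : Fin n) := by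
    intro x h1; simp [f, h1]
  have hfB : ∀ x (h2 : cls x = b), f x = (e.symm ⟨x, by simp [hB, h2]⟩ : Fin n) := by
    intro x h2
    have h1 : ¬ cls x = c := by rw [h2]; exact fun h => hne h.symm
    show dite _ _ _ = _
    rw [dif_neg h1, dif_pos h2]
  have hfO : ∀ x, ¬ cls x = c → ¬ cls x = b → f x = x := by
    intro x h1 h2; simp [f, h1, h2]
  have hinv : Function.Involutive f := by
    intro x
    by_cases h1 : cls x = c
    · rw [hfA x h1]
      have hb : cls ((e ⟨x, by simp [hA, h1]⟩ : {x // x ∈ B}) : Fin n) = b := hmemB _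
      rw [hfB _ hb]
      have : (⟨((e ⟨x, by simp [hA, h1]⟩ : {x // x ∈ B}) : Fin n), by
          simp [hB, hb]⟩ : {x // x ∈ B}) = e ⟨x, by simp [hA, h1]⟩ := rfl
      rw [this, Equiv.symm_apply_apply]
    · by_cases h2 : cls x = b
      · rw [hfB x h2]
        have hc : cls ((e.symm ⟨x, by simp [hB, h2]⟩ : {x // x ∈ A}) : Fin n) = c := hmemA _
        rw [hfA _ hc]
        have : (⟨((e.symm ⟨x, by simp [hB, h2]⟩ : {x // x ∈ A}) : Fin n), by
            simp [hA, hc]⟩ : {x // x ∈ A}) = e.symm ⟨x, by simp [hB, h2]⟩ := rfl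
        rw [this, Equiv.apply_symm_apply]
      · rw [hfO x h1 h2, hfO x h1 h2]
  refine ⟨hinv.toPerm f, fun x => ?_⟩
  show cls (f x) = Equiv.swap c b (cls x)
  by_cases h1 : cls x = c
  · rw [hfA x h1, hmemB _, h1, Equiv.swap_apply_left]
  · by_cases h2 : cls x = b
    · rw [hfB x h2, hmemA _, h2, Equiv.swap_apply_right]
    · rw [hfO x h1 h2, Equiv.swap_apply_of_ne_of_ne h1 h2]

private lemma partA_aux {n C : ℕ} (cls : Fin n → Fin C)
    (S : Matrix (Fin n) (Fin n) ℝ) (hWS : WSymmetric (supconW cls) S) :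
    ∀ i j i' j' : Fin n, i ≠ j → i' ≠ j' → cls i = cls i' → cls j = cls j' →
      S i j = S i' j' := by
  intro i j i' j' hij hij' hii hjj
  set σ1 := Equiv.swap i i' with hσ1
  have hW1 : permMat σ1 (supconW cls) = supconW cls :=
    supconW_perm_inv cls σ1 id Function.injective_id (fun x => cls_swap cls hii x)
  have hS1 : permMat σ1 S = S := hWS σ1 hW1
  set j'' := σ1 j' with hj''def
  have hj'' : cls j'' = cls j := by
    rw [hj''def, cls_swap cls hii j', hjj]
  have hji : j'' ≠ i := by
    intro h
    apply hij'
    have h2 : σ1 i = j' := by rw [← h]; exact Equiv.swap_apply_self i i' j'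
    rw [hσ1, Equiv.swap_apply_left] at h2
    exact h2
  set σ2 := Equiv.swap j j'' with hσ2
  have hW2 : permMat σ2 (supconW cls) = supconW cls :=
    supconW_perm_inv cls σ2 id Function.injective_id (fun x => cls_swap cls hj''.symm x)
  have hS2 : permMat σ2 S = S := hWS σ2 hW2
  have e1 : S (σ1 i') (σ1 j') = S i' j' := congrFun (congrFun hS1 i') j'
  have e2 : S (σ2 i) (σ2 j'') = S i j'' := congrFun (congrFun hS2 i) j''
  have hσ1i' : σ1 i' = i := Equiv.swap_apply_right i i'
  have hσ2i : σ2 i = i := Equiv.swap_apply_of_ne_of_ne hij (Ne.symm hji)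
  have hσ2j'' : σ2 j'' = j := Equiv.swap_apply_right j j''
  calc S i j = S (σ2 i) (σ2 j'') := by rw [hσ2i, hσ2j'']
    _ = S i j'' := e2
    _ = S (σ1 i') (σ1 j') := by rw [hσ1i']
    _ = S i' j' := e1

/-- block structure of `W`-symmetric matrices: a `W`-symmetric matrix
is constant on blocks up to diagonal elements; off-diagonal blocks of equal shape
carry equal values; diagonal blocks of equal shape carry equal off-diagonal values. -/
theorem statement13 {n C : ℕ} (cls : Fin n → Fin C)
    (hsize : ∀ c : Fin C, 2 ≤ classSize cls c)
    (S : Matrix (Fin n) (Fin n) ℝ) (hSsymm : S.IsSymm)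
    (hWS : WSymmetric (supconW cls) S) :
    (∀ i j i' j' : Fin n, i ≠ j → i' ≠ j' → cls i = cls i' → cls j = cls j' →
      S i j = S i' j') ∧
    (∀ c c' b b' : Fin C, c ≠ c' → b ≠ b' →
      classSize cls c = classSize cls b → classSize cls c' = classSize cls b' →
      ∀ i j i' j' : Fin n, cls i = c → cls j = c' → cls i' = b → cls j' = b' →
        S i j = S i' j') ∧
    (∀ c c' : Fin C, classSize cls c = classSize cls c' →
      ∀ i j i' j' : Fin n, i ≠ j → i' ≠ j' →
        cls i = c → cls j = c → cls i' = c' → cls j' = c' →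
        S i j = S i' j') := by
  have partA := partA_aux cls S hWS
  refine ⟨partA, ?_, ?_⟩
  · intro c c' b b' hcc' hbb' hcb hc'b' i j i' j' hi hj hi' hj'
    have hij : i ≠ j := fun h => hcc' (by rw [← hi, ← hj, h])
    obtain ⟨σ1, hσ1⟩ := classSwap cls c b hcb
    have hS1 : permMat σ1 S = S :=
      hWS σ1 (supconW_perm_inv cls σ1 _ (Equiv.swap c b).injective hσ1)
    have e1 : S (σ1 i') (σ1 j') = S i' j' := congrFun (congrFun hS1 i') j'
    set i₁ := σ1 i' with hi₁def
    set j₁ := σ1 j' with hj₁def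
    have hi₁ : cls i₁ = c := by
      rw [hi₁def, hσ1, hi', Equiv.swap_apply_right]
    have hj₁ : cls j₁ = Equiv.swap c b b' := by rw [hj₁def, hσ1, hj']
    rcases eq_or_ne b' c with rfl | hb'c
    · -- b' = c, so j₁ lands in class b
      have hj₁b : cls j₁ = b := by rw [hj₁, Equiv.swap_apply_left]
      have hbc' : classSize cls b = classSize cls c' := by rw [← hcb, ← hc'b']
      obtain ⟨σ2, hσ2⟩ := classSwap cls b c' hbc'
      have hS2 : permMat σ2 S = S :=
        hWS σ2 (supconW_perm_inv cls σ2 _ (Equiv.swap b c').injective hσ2)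
      have e2 : S (σ2 i₁) (σ2 j₁) = S i₁ j₁ := congrFun (congrFun hS2 i₁) j₁
      have hcb' : b' ≠ b := Ne.symm hbb'
      have hi₂ : cls (σ2 i₁) = b' := by
        rw [hσ2, hi₁, Equiv.swap_apply_of_ne_of_ne hcb' hcc']
      have hj₂ : cls (σ2 j₁) = c' := by
        rw [hσ2, hj₁b, Equiv.swap_apply_left]
      have hne2 : σ2 i₁ ≠ σ2 j₁ := fun h => hcc' (by rw [← hi₂, ← hj₂, h])
      calc S i j = S (σ2 i₁) (σ2 j₁) :=
            partA i j _ _ hij hne2 (by rw [hi, hi₂]) (by rw [hj, hj₂])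
        _ = S i₁ j₁ := e2
        _ = S i' j' := e1
    · -- b' ∉ {c, b}
      have hj₁b' : cls j₁ = b' := by
        rw [hj₁, Equiv.swap_apply_of_ne_of_ne hb'c (Ne.symm hbb')]
      obtain ⟨σ2, hσ2⟩ := classSwap cls c' b' hc'b'
      have hS2 : permMat σ2 S = S :=
        hWS σ2 (supconW_perm_inv cls σ2 _ (Equiv.swap c' b').injective hσ2)
      have e2 : S (σ2 i₁) (σ2 j₁) = S i₁ j₁ := congrFun (congrFun hS2 i₁) j₁
      have hi₂ : cls (σ2 i₁) = c := by
        rw [hσ2, hi₁, Equiv.swap_apply_of_ne_of_ne hcc' (Ne.symm hb'c)]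
      have hj₂ : cls (σ2 j₁) = c' := by
        rw [hσ2, hj₁b', Equiv.swap_apply_right]
      have hne2 : σ2 i₁ ≠ σ2 j₁ := fun h => hcc' (by rw [← hi₂, ← hj₂, h])
      calc S i j = S (σ2 i₁) (σ2 j₁) :=
            partA i j _ _ hij hne2 (by rw [hi, hi₂]) (by rw [hj, hj₂])
        _ = S i₁ j₁ := e2
        _ = S i' j' := e1
  · intro c c' hsz i j i' j' hij hij' hi hj hi' hj'
    obtain ⟨σ, hσ⟩ := classSwap cls c c' hsz
    have hS1 : permMat σ S = S :=
      hWS σ (supconW_perm_inv cls σ _ (Equiv.swap c c').injective hσ)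
    have e1 : S (σ i') (σ j') = S i' j' := congrFun (congrFun hS1 i') j'
    have hi₁ : cls (σ i') = c := by rw [hσ, hi', Equiv.swap_apply_right]
    have hj₁ : cls (σ j') = c := by rw [hσ, hj', Equiv.swap_apply_right]
    have hne : σ i' ≠ σ j' := fun h => hij' (σ.injective h)
    calc S i j = S (σ i') (σ j') :=
          partA i j _ _ hij hne (by rw [hi, hi₁]) (by rw [hj, hj₁])
      _ = S i' j' := e1
end
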